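/- arXiv:2508.12122 — 4 statements merged into one kernel-verified Lean document; each statement's English description precedes it below -/
import Mathlib

section
/- Let d ≥ 2, let G be a closed fractal subgroup of Aut T_d, and let H be an open self-similar subgroup of G. Then the normal core N = ⋂_{a ∈ G} aHa⁻¹ of H in G is an open, normal, self-similar subgroup of G. -/
open scoped Pointwise

namespace TreeDyn

/-- Vertices of the `d`-regular rooted tree: finite words over `{0,…,d-1}`,
with the empty word as root and children of `w` the words `w ++ [x]`. -/
abbrev Vertex (d : ℕ) := List (Fin d)

/-- A function on words is length-preserving and prefix-preserving. -/
def LP (d : ℕ) (f : Vertex d → Vertex d) : Prop :=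
  (∀ w : Vertex d, (f w).length = w.length) ∧
    ∀ v w : Vertex d, v <+: w → f v <+: f w

theorem LP.id' (d : ℕ) : LP d id := ⟨fun _ => rfl, fun _ _ h => h⟩

theorem LP.comp {d : ℕ} {f g : Vertex d → Vertex d} (hf : LP d f) (hg : LP d g) :
    LP d (f ∘ g) :=
  ⟨fun w => (hf.1 (g w)).trans (hg.1 w), fun v w h => hf.2 _ _ (hg.2 _ _ h)⟩

/-- The automorphism group of the rooted `d`-regular tree, realized as the subgroup of
permutations of the vertex set which fix the root and preserve the child relation
(equivalently: length- and prefix-preserving permutations). -/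
def treeAut (d : ℕ) : Subgroup (Equiv.Perm (Vertex d)) where
  carrier := {g | LP d ⇑g ∧ LP d ⇑g⁻¹}
  one_mem' := ⟨LP.id' d, by simpa using LP.id' d⟩
  mul_mem' := by
    rintro a b ⟨ha1, ha2⟩ ⟨hb1, hb2⟩
    refine ⟨?_, ?_⟩
    · simpa [Equiv.Perm.coe_mul] using ha1.comp hb1
    · rw [mul_inv_rev]
      simpa [Equiv.Perm.coe_mul] using hb2.comp ha2
  inv_mem' := by
    rintro a ⟨h1, h2⟩
    exact ⟨h2, by simpa using h1⟩

/-- `Aut T_d`, the automorphism group of the `d`-regular rooted tree. -/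
abbrev AutT (d : ℕ) := ↥(treeAut d)

namespace AutT

variable {d : ℕ}

/-- The underlying permutation of the vertices. -/
def toPerm (g : AutT d) : Equiv.Perm (Vertex d) := g.1

theorem toPerm_mul (g h : AutT d) : (g * h).toPerm = g.toPerm * h.toPerm := rfl

theorem toPerm_inv (g : AutT d) : (g⁻¹).toPerm = (g.toPerm)⁻¹ := rfl

theorem toPerm_one : (1 : AutT d).toPerm = 1 := rfl

theorem length_apply (g : AutT d) (w : Vertex d) : (g.toPerm w).length = w.length :=
  g.2.1.1 w

theorem prefix_apply (g : AutT d) {v w : Vertex d} (h : v <+: w) :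
    g.toPerm v <+: g.toPerm w :=
  g.2.1.2 v w h

theorem take_apply (g : AutT d) (v u : Vertex d) :
    (g.toPerm (v ++ u)).take v.length = g.toPerm v := by
  have h : g.toPerm v <+: g.toPerm (v ++ u) := g.prefix_apply (List.prefix_append v u)
  have h2 := List.prefix_iff_eq_take.mp h
  rw [length_apply] at h2
  exact h2.symm

theorem apply_append (g : AutT d) (v u : Vertex d) :
    g.toPerm (v ++ u) = g.toPerm v ++ (g.toPerm (v ++ u)).drop v.length := by
  conv_lhs => rw [← List.take_append_drop v.length (g.toPerm (v ++ u))]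
  rw [take_apply]

/-- The section function: the action of `g` on the subtree over `v`, transported
to the whole tree. -/
def secFun (g : AutT d) (v : Vertex d) : Vertex d → Vertex d :=
  fun u => (g.toPerm (v ++ u)).drop v.length

theorem secFun_spec (g : AutT d) (v u : Vertex d) :
    g.toPerm (v ++ u) = g.toPerm v ++ secFun g v u :=
  apply_append g v u

theorem secFun_left (g : AutT d) (v u : Vertex d) :
    secFun g⁻¹ (g.toPerm v) (secFun g v u) = u := by
  have h1 := secFun_spec g⁻¹ (g.toPerm v) (secFun g v u)
  rw [← secFun_spec g v u] at h1
  rw [toPerm_inv] at h1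
  simp only [Equiv.Perm.inv_def, Equiv.symm_apply_apply] at h1
  exact (List.append_cancel_left h1).symm

theorem LP_secFun (g : AutT d) (v : Vertex d) : LP d (secFun g v) := by
  constructor
  · intro w
    simp only [secFun, List.length_drop, length_apply, List.length_append]
    omega
  · intro u1 u2 h
    have h2 : g.toPerm (v ++ u1) <+: g.toPerm (v ++ u2) := by
      refine g.prefix_apply ?_
      obtain ⟨t, ht⟩ := h
      exact ⟨t, by rw [List.append_assoc, ht]⟩
    exact h2.drop v.length

/-- The section of the tree automorphism `g` at the vertex `v`: the automorphism `g|_v` with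
`g (v ++ u) = g v ++ g|_v u`. -/
def sec (g : AutT d) (v : Vertex d) : AutT d :=
  ⟨{ toFun := secFun g v
     invFun := secFun g⁻¹ (g.toPerm v)
     left_inv := secFun_left g v
     right_inv := by
       intro u
       have h := secFun_left g⁻¹ (g.toPerm v) u
       rw [inv_inv] at h
       rw [toPerm_inv] at h
       simp only [Equiv.Perm.inv_def, Equiv.symm_apply_apply] at h
       exact h },
   by
     refine ⟨LP_secFun g v, ?_⟩
     have : ⇑(({ toFun := secFun g v
                 invFun := secFun g⁻¹ (g.toPerm v)
                 left_inv := secFun_left g v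
                 right_inv := by
                   intro u
                   have h := secFun_left g⁻¹ (g.toPerm v) u
                   rw [inv_inv] at h
                   rw [toPerm_inv] at h
                   simp only [Equiv.Perm.inv_def, Equiv.symm_apply_apply] at h
                   exact h } : Equiv.Perm (Vertex d))⁻¹) = secFun g⁻¹ (g.toPerm v) := rfl
     rw [this]
     exact LP_secFun g⁻¹ (g.toPerm v)⟩

theorem sec_apply (g : AutT d) (v u : Vertex d) :
    (sec g v).toPerm u = (g.toPerm (v ++ u)).drop v.length := rfl

end AutT

open AutT

/-- The stabilizer of the vertex `v` in `Aut T_d`. -/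
def stabT (d : ℕ) (v : Vertex d) : Subgroup (AutT d) where
  carrier := {g | g.toPerm v = v}
  one_mem' := rfl
  mul_mem' := by
    intro a b ha hb
    show (a * b).toPerm v = v
    rw [toPerm_mul, Equiv.Perm.mul_apply]
    rw [show b.toPerm v = v from hb, show a.toPerm v = v from ha]
  inv_mem' := by
    intro a ha
    show (a⁻¹).toPerm v = v
    rw [toPerm_inv]
    rw [Equiv.Perm.inv_eq_iff_eq]
    exact (show a.toPerm v = v from ha).symm

/-- The self-similarity homomorphism `π_v` from the stabilizer of `v` to `Aut T_d`,
`g ↦ g|_v`. -/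
def secHom (d : ℕ) (v : Vertex d) : (stabT d v) →* AutT d where
  toFun g := sec g.1 v
  map_one' := by
    apply Subtype.ext
    apply Equiv.ext
    intro u
    show ((1 : AutT d).toPerm (v ++ u)).drop v.length = (1 : AutT d).toPerm u
    rw [toPerm_one]
    simp [List.drop_left]
  map_mul' := by
    intro a b
    apply Subtype.ext
    apply Equiv.ext
    intro u
    have hb : (b.1).toPerm v = v := b.2
    show ((a.1 * b.1).toPerm (v ++ u)).drop v.length
        = (sec a.1 v).toPerm ((sec b.1 v).toPerm u)
    rw [toPerm_mul, Equiv.Perm.mul_apply]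
    congr 1
    congr 1
    have h := secFun_spec b.1 v u
    rw [hb] at h
    exact h

/-- The image subgroup `H^v = π_v(H_v)` of the stabilizer of `v` in `H` under the
self-similarity map. -/
def secSG (d : ℕ) (H : Subgroup (AutT d)) (v : Vertex d) : Subgroup (AutT d) :=
  (H.subgroupOf (stabT d v)).map (secHom d v)

/-- A subgroup of `Aut T_d` is self-similar if `H^v ≤ H` for every vertex `v`. -/
def IsSelfSimilar (d : ℕ) (H : Subgroup (AutT d)) : Prop :=
  ∀ v : Vertex d, secSG d H v ≤ H

/-- A subgroup of `Aut T_d` is fractal if `H^v = H` for every vertex `v`. -/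
def IsFractal (d : ℕ) (H : Subgroup (AutT d)) : Prop :=
  ∀ v : Vertex d, secSG d H v = H

end TreeDyn
namespace TreeDyn

open AutT

variable {d : ℕ}

instance : TopologicalSpace (Vertex d) := ⊥
instance : DiscreteTopology (Vertex d) := ⟨rfl⟩

/-- The profinite topology on `Aut T_d`: the topology of pointwise convergence on vertices. -/
instance : TopologicalSpace (AutT d) :=
  TopologicalSpace.induced (fun g : AutT d => (g.toPerm : Vertex d → Vertex d)) inferInstance

theorem continuous_toFun : Continuous fun g : AutT d => (g.toPerm : Vertex d → Vertex d) :=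
  continuous_induced_dom

theorem continuous_ev (x : Vertex d) : Continuous fun g : AutT d => g.toPerm x :=
  (continuous_apply x).comp continuous_toFun

instance : IsTopologicalGroup (AutT d) where
  continuous_mul := by
    apply continuous_induced_rng.2
    show Continuous fun p : AutT d × AutT d => ((p.1 * p.2).toPerm : Vertex d → Vertex d)
    apply continuous_pi
    intro x
    rw [continuous_discrete_rng]
    intro z
    have heq : ((fun p : AutT d × AutT d => (p.1 * p.2).toPerm x)) ⁻¹' {z}
        = ⋃ y : Vertex d, ((fun p : AutT d × AutT d => p.2.toPerm x) ⁻¹' {y})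
            ∩ ((fun p : AutT d × AutT d => p.1.toPerm y) ⁻¹' {z}) := by
      ext p
      simp only [Set.mem_preimage, Set.mem_singleton_iff, Set.mem_iUnion, Set.mem_inter_iff]
      constructor
      · intro h
        exact ⟨p.2.toPerm x, rfl, by rw [toPerm_mul, Equiv.Perm.mul_apply] at h; exact h⟩
      · rintro ⟨y, h1, h2⟩
        rw [toPerm_mul, Equiv.Perm.mul_apply, h1, h2]
    rw [heq]
    apply isOpen_iUnion
    intro y
    exact ((isOpen_discrete _).preimage ((continuous_ev x).comp continuous_snd)).inter
      ((isOpen_discrete _).preimage ((continuous_ev y).comp continuous_fst))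
  continuous_inv := by
    apply continuous_induced_rng.2
    show Continuous fun g : AutT d => ((g⁻¹).toPerm : Vertex d → Vertex d)
    apply continuous_pi
    intro x
    rw [continuous_discrete_rng]
    intro z
    have heq : (fun g : AutT d => (g⁻¹).toPerm x) ⁻¹' {z}
        = (fun g : AutT d => g.toPerm z) ⁻¹' {x} := by
      ext g
      simp only [Set.mem_preimage, Set.mem_singleton_iff]
      rw [toPerm_inv]
      exact Equiv.Perm.inv_eq_iff_eq.trans eq_comm
    rw [heq]
    exact (isOpen_discrete _).preimage (continuous_ev z)

end TreeDyn
namespace TreeDyn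

open AutT

/-- `J` is the self-similar closure of `H` in `G`: the smallest closed self-similar
subgroup of `G` containing `H`. -/
def IsSelfSimilarClosure (d : ℕ) (G H J : Subgroup (AutT d)) : Prop :=
  H ≤ J ∧ J ≤ G ∧ IsClosed (J : Set (AutT d)) ∧ IsSelfSimilar d J ∧
    ∀ J' : Subgroup (AutT d), H ≤ J' → J' ≤ G → IsClosed (J' : Set (AutT d)) →
      IsSelfSimilar d J' → J ≤ J'

/-- The pointwise stabilizer in `Aut T_d` of the vertices at level `m`. -/
def levelStab (d : ℕ) (m : ℕ) : Subgroup (AutT d) where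
  carrier := {g | ∀ v : Vertex d, v.length = m → g.toPerm v = v}
  one_mem' := fun _ _ => rfl
  mul_mem' := by
    intro a b ha hb v hv
    show (a * b).toPerm v = v
    rw [toPerm_mul, Equiv.Perm.mul_apply, hb v hv, ha v hv]
  inv_mem' := by
    intro a ha v hv
    show (a⁻¹).toPerm v = v
    rw [toPerm_inv, Equiv.Perm.inv_eq_iff_eq]
    exact (ha v hv).symm

/-- A topological group is pronilpotent if its quotient by every open normal subgroup
is nilpotent. -/
def Pronilpotent (G : Type*) [Group G] [TopologicalSpace G] : Prop :=
  ∀ (N : Subgroup G) [N.Normal], IsOpen (N : Set G) → Group.IsNilpotent (G ⧸ N)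

/-- A topological group is pro-`p` if its quotient by every open normal subgroup
is a `p`-group. -/
def IsProP (p : ℕ) (G : Type*) [Group G] [TopologicalSpace G] : Prop :=
  ∀ (N : Subgroup G) [N.Normal], IsOpen (N : Set G) → IsPGroup p (G ⧸ N)

/-- A topological group is prosolvable if its quotient by every open normal subgroup
is solvable. -/
def Prosolvable (G : Type*) [Group G] [TopologicalSpace G] : Prop :=
  ∀ (N : Subgroup G) [N.Normal], IsOpen (N : Set G) → IsSolvable (G ⧸ N)

/-- The Frattini subgroup of a topological group: the intersection of its
maximal open (proper) subgroups. -/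
def frattiniOpen (G : Type*) [Group G] [TopologicalSpace G] : Subgroup G :=
  sInf {M : Subgroup G | IsOpen (M : Set G) ∧ M ≠ ⊤ ∧
    ∀ M' : Subgroup G, IsOpen (M' : Set G) → M < M' → M' = ⊤}

end TreeDyn
namespace TreeDyn

open AutT

variable {d : ℕ}

/-- The cyclic successor on `Fin d`. -/
def succFin (x : Fin d) : Fin d :=
  ⟨(x.1 + 1) % d, Nat.mod_lt _ (Nat.lt_of_le_of_lt (Nat.zero_le _) x.2)⟩

/-- The cyclic predecessor on `Fin d`. -/
def predFin (x : Fin d) : Fin d :=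
  ⟨(x.1 + (d - 1)) % d, Nat.mod_lt _ (Nat.lt_of_le_of_lt (Nat.zero_le _) x.2)⟩

theorem predFin_succFin (x : Fin d) : predFin (succFin x) = x := by
  have hd : 0 < d := Nat.lt_of_le_of_lt (Nat.zero_le _) x.2
  apply Fin.ext
  show ((x.1 + 1) % d + (d - 1)) % d = x.1
  rw [Nat.mod_add_mod, show x.1 + 1 + (d - 1) = x.1 + d by omega, Nat.add_mod_right,
    Nat.mod_eq_of_lt x.2]

theorem succFin_predFin (x : Fin d) : succFin (predFin x) = x := by
  have hd : 0 < d := Nat.lt_of_le_of_lt (Nat.zero_le _) x.2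
  apply Fin.ext
  show ((x.1 + (d - 1)) % d + 1) % d = x.1
  rw [Nat.mod_add_mod, show x.1 + (d - 1) + 1 = x.1 + d by omega, Nat.add_mod_right,
    Nat.mod_eq_of_lt x.2]

theorem succFin_val_eq_zero_iff (x : Fin d) : (succFin x).1 = 0 ↔ x.1 + 1 = d := by
  show (x.1 + 1) % d = 0 ↔ x.1 + 1 = d
  by_cases h : x.1 + 1 = d
  · simp [h, Nat.mod_self]
  · rw [Nat.mod_eq_of_lt (by omega)]
    omega

theorem predFin_val_succ_eq_iff (x : Fin d) : (predFin x).1 + 1 = d ↔ x.1 = 0 := by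
  have hd : 0 < d := Nat.lt_of_le_of_lt (Nat.zero_le _) x.2
  show (x.1 + (d - 1)) % d + 1 = d ↔ x.1 = 0
  rcases Nat.eq_zero_or_pos x.1 with h | h
  · rw [h]
    simp only [Nat.zero_add]
    rw [Nat.mod_eq_of_lt (show d - 1 < d by omega)]
    simp only [iff_true, eq_self_iff_true]
    omega
  · rw [show x.1 + (d - 1) = (x.1 - 1) + d by omega, Nat.add_mod_right,
      Nat.mod_eq_of_lt (show x.1 - 1 < d by omega)]
    omega

/-- The odometer function: adds one with carrying, on words read root-first. -/
def odF (d : ℕ) : Vertex d → Vertex d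
  | [] => []
  | x :: u => succFin x :: (if x.1 + 1 = d then odF d u else u)

/-- The inverse odometer function. -/
def odG (d : ℕ) : Vertex d → Vertex d
  | [] => []
  | x :: u => predFin x :: (if x.1 = 0 then odG d u else u)

theorem odG_odF (u : Vertex d) : odG d (odF d u) = u := by
  induction u with
  | nil => rfl
  | cons x t ih =>
    simp only [odF, odG, predFin_succFin]
    by_cases h : x.1 + 1 = d
    · rw [if_pos h, if_pos ((succFin_val_eq_zero_iff x).mpr h), ih]
    · rw [if_neg h, if_neg (fun hc => h ((succFin_val_eq_zero_iff x).mp hc))]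

theorem odF_odG (u : Vertex d) : odF d (odG d u) = u := by
  induction u with
  | nil => rfl
  | cons x t ih =>
    simp only [odF, odG, succFin_predFin]
    by_cases h : x.1 = 0
    · rw [if_pos h, if_pos ((predFin_val_succ_eq_iff x).mpr h), ih]
    · rw [if_neg h, if_neg (fun hc => h ((predFin_val_succ_eq_iff x).mp hc))]

theorem odF_append (a b : Vertex d) :
    odF d (a ++ b) = odF d a ++ (if ∀ x ∈ a, x.1 + 1 = d then odF d b else b) := by
  induction a with
  | nil => simp [odF]
  | cons x t ih =>
    by_cases h : x.1 + 1 = d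
    · by_cases h2 : ∀ y ∈ t, y.1 + 1 = d
      · have hall : ∀ y ∈ x :: t, y.1 + 1 = d := by
          intro y hy
          rcases List.mem_cons.mp hy with rfl | hy
          · exact h
          · exact h2 y hy
        simp only [List.cons_append, List.append_eq, odF, if_pos h, if_pos h2, if_pos hall, ih]
      · have hall : ¬ ∀ y ∈ x :: t, y.1 + 1 = d :=
          fun hc => h2 fun y hy => hc y (List.mem_cons_of_mem x hy)
        simp only [List.cons_append, List.append_eq, odF, if_pos h, if_neg h2, if_neg hall, ih]
    · have hall : ¬ ∀ y ∈ x :: t, y.1 + 1 = d :=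
        fun hc => h (hc x List.mem_cons_self)
      simp only [List.cons_append, List.append_eq, odF, if_neg h, if_neg hall]

theorem odG_append (a b : Vertex d) :
    odG d (a ++ b) = odG d a ++ (if ∀ x ∈ a, x.1 = 0 then odG d b else b) := by
  induction a with
  | nil => simp [odG]
  | cons x t ih =>
    by_cases h : x.1 = 0
    · by_cases h2 : ∀ y ∈ t, y.1 = 0
      · have hall : ∀ y ∈ x :: t, y.1 = 0 := by
          intro y hy
          rcases List.mem_cons.mp hy with rfl | hy
          · exact h
          · exact h2 y hy
        simp only [List.cons_append, List.append_eq, odG, if_pos h, if_pos h2, if_pos hall, ih]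
      · have hall : ¬ ∀ y ∈ x :: t, y.1 = 0 :=
          fun hc => h2 fun y hy => hc y (List.mem_cons_of_mem x hy)
        simp only [List.cons_append, List.append_eq, odG, if_pos h, if_neg h2, if_neg hall, ih]
    · have hall : ¬ ∀ y ∈ x :: t, y.1 = 0 :=
        fun hc => h (hc x List.mem_cons_self)
      simp only [List.cons_append, List.append_eq, odG, if_neg h, if_neg hall]

theorem LP_odF : LP d (odF d) := by
  constructor
  · intro w
    induction w with
    | nil => rfl
    | cons x t ih =>
      simp only [odF]
      by_cases h : x.1 + 1 = d <;> simp [h, ih]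
  · intro v w h
    obtain ⟨t, rfl⟩ := h
    rw [odF_append]
    exact ⟨_, rfl⟩

theorem LP_odG : LP d (odG d) := by
  constructor
  · intro w
    induction w with
    | nil => rfl
    | cons x t ih =>
      simp only [odG]
      by_cases h : x.1 = 0 <;> simp [h, ih]
  · intro v w h
    obtain ⟨t, rfl⟩ := h
    rw [odG_append]
    exact ⟨_, rfl⟩

/-- The standard odometer as a permutation of the vertices. -/
def odPerm (d : ℕ) : Equiv.Perm (Vertex d) where
  toFun := odF d
  invFun := odG d
  left_inv := odG_odF
  right_inv := odF_odG

/-- The standard odometer `ω ∈ Aut T_d` (adds one to a `d`-adic digit string,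
with carrying). -/
def od (d : ℕ) : AutT d :=
  ⟨odPerm d, ⟨LP_odF, LP_odG⟩⟩

/-- The standard `d`-cycle `σ = (0 1 … d-1)` on the first level. -/
def sigmaFin (d : ℕ) : Equiv.Perm (Fin d) where
  toFun := succFin
  invFun := predFin
  left_inv := predFin_succFin
  right_inv := succFin_predFin

end TreeDyn


/-! The core `N` of `H` in `G` is normal in `G` by construction. It is open because the open
subgroup `H` of `G` contains `G ∩ St(m)` for the pointwise stabilizer `St(m)` of some ball
around the root, and `St(m)` is normal in all of `Aut T_d`, so every `G`-conjugate of `H`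
contains it too. For self-similarity, let `g ∈ N` fix `v` and `a ∈ G`; by fractality
`a = b|_v` with `b ∈ G` fixing `v`, and then `a⁻¹ g|_v a = (b⁻¹ g b)|_v ∈ H` because
`b⁻¹ g b ∈ N ≤ H` and `H` is self-similar. -/

namespace TreeDyn

open AutT

section NormalCore

variable {α : Type*} [Group α]

def normalCoreIn (G H : Subgroup α) : Subgroup α :=
  ⨅ a ∈ G, MulAut.conj a • H

variable {G H : Subgroup α}

theorem mem_normalCoreIn {x : α} : x ∈ normalCoreIn G H ↔ ∀ a ∈ G, a⁻¹ * x * a ∈ H := by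
  simp only [normalCoreIn, Subgroup.mem_iInf, Subgroup.mem_pointwise_smul_iff_inv_smul_mem,
    ← map_inv, MulAut.smul_def, MulAut.conj_apply, inv_inv]

theorem normalCoreIn_le : normalCoreIn G H ≤ H := fun x hx => by
  simpa using mem_normalCoreIn.mp hx 1 G.one_mem

theorem conj_mem_normalCoreIn {b x : α} (hb : b ∈ G) (hx : x ∈ normalCoreIn G H) :
    b⁻¹ * x * b ∈ normalCoreIn G H :=
  mem_normalCoreIn.mpr fun a ha => by
    simpa [mul_assoc] using mem_normalCoreIn.mp hx (b * a) (G.mul_mem hb ha)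

theorem normalCoreIn_subgroupOf_normal : ((normalCoreIn G H).subgroupOf G).Normal where
  conj_mem x hx g := Subgroup.mem_subgroupOf.mpr <| by
    simpa using conj_mem_normalCoreIn (G.inv_mem g.2) (Subgroup.mem_subgroupOf.mp hx)

theorem inf_le_normalCoreIn {K : Subgroup α} [K.Normal] (hK : K ⊓ G ≤ H) :
    K ⊓ G ≤ normalCoreIn G H := fun x ⟨hxK, hxG⟩ =>
  mem_normalCoreIn.mpr fun a ha => hK
    ⟨by simpa using Subgroup.Normal.conj_mem ‹_› x hxK a⁻¹,
      G.mul_mem (G.mul_mem (G.inv_mem ha) hxG) ha⟩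

theorem isOpen_normalCoreIn_subgroupOf [TopologicalSpace α] [IsTopologicalGroup α]
    {K : Subgroup α} [K.Normal] (hKopen : IsOpen (K : Set α)) (hK : K ⊓ G ≤ H) :
    IsOpen ((normalCoreIn G H).subgroupOf G : Set G) := by
  refine Subgroup.isOpen_mono (H₁ := K.subgroupOf G) (fun x hx => ?_)
    (hKopen.preimage continuous_subtype_val)
  exact Subgroup.mem_subgroupOf.mpr
    (inf_le_normalCoreIn hK ⟨Subgroup.mem_subgroupOf.mp hx, x.2⟩)

end NormalCore

section BallStabilizer

variable {d : ℕ}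

def ballStab (d m : ℕ) : Subgroup (AutT d) :=
  fixingSubgroup (AutT d) {v : Vertex d | v.length ≤ m}

theorem mem_ballStab {m : ℕ} {g : AutT d} :
    g ∈ ballStab d m ↔ ∀ v : Vertex d, v.length ≤ m → g.toPerm v = v :=
  mem_fixingSubgroup_iff (AutT d)

theorem isOpen_ballStab (d m : ℕ) : IsOpen (ballStab d m : Set (AutT d)) := by
  have h : (ballStab d m : Set (AutT d)) =
      ⋂ v ∈ {v : Vertex d | v.length ≤ m}, (fun g : AutT d => g.toPerm v) ⁻¹' {v} := by
    ext g
    simp only [SetLike.mem_coe, mem_ballStab, Set.mem_iInter, Set.mem_preimage,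
      Set.mem_singleton_iff, Set.mem_ofPred_eq]
  rw [h]
  exact (List.finite_length_le (Fin d) m).isOpen_biInter fun v _ =>
    (isOpen_discrete _).preimage (continuous_ev v)

instance ballStab_normal (d m : ℕ) : (ballStab d m).Normal where
  conj_mem g hg a := mem_ballStab.mpr fun v hv => by
    have hfix : g.toPerm (a.toPerm.symm v) = a.toPerm.symm v := mem_ballStab.mp hg _ (by
      rw [← Equiv.Perm.inv_def, ← toPerm_inv, length_apply]; exact hv)
    simp [toPerm_mul, toPerm_inv, hfix]

theorem exists_ballStab_subset {s : Set (AutT d)} (hs : IsOpen s) (h1 : 1 ∈ s) :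
    ∃ m, (ballStab d m : Set (AutT d)) ⊆ s := by
  obtain ⟨t, ht, rfl⟩ := isOpen_induced_iff.mp hs
  obtain ⟨I, u, hu, hIt⟩ := isOpen_pi_iff.mp ht _ h1
  refine ⟨I.sup List.length, fun g hg => hIt fun v hv => ?_⟩
  show g.toPerm v ∈ u v
  rw [mem_ballStab.mp hg v (Finset.le_sup hv)]
  simpa [toPerm_one] using (hu v hv).2

theorem exists_ballStab_inf_le {G H : Subgroup (AutT d)}
    (hH : IsOpen (H.subgroupOf G : Set G)) : ∃ m, ballStab d m ⊓ G ≤ H := by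
  obtain ⟨t, ht, htH⟩ := isOpen_induced_iff.mp hH
  have h1 : (1 : AutT d) ∈ t :=
    show (1 : G) ∈ Subtype.val ⁻¹' t from htH ▸ (H.subgroupOf G).one_mem
  obtain ⟨m, hm⟩ := exists_ballStab_subset ht h1
  refine ⟨m, fun g ⟨hgm, hgG⟩ => ?_⟩
  have : (⟨g, hgG⟩ : G) ∈ (H.subgroupOf G : Set G) := htH ▸ hm hgm
  exact Subgroup.mem_subgroupOf.mp this

theorem isSelfSimilar_normalCoreIn {G H : Subgroup (AutT d)}
    (hG : ∀ v, G ≤ secSG d G v) (hH : IsSelfSimilar d H) :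
    IsSelfSimilar d (normalCoreIn G H) := by
  rintro v _ ⟨g, hg, rfl⟩
  refine mem_normalCoreIn.mpr fun a ha => ?_
  obtain ⟨b, hb, rfl⟩ := hG v ha
  have hconj : ((b⁻¹ * g * b : stabT d v) : AutT d) ∈ H :=
    normalCoreIn_le (conj_mem_normalCoreIn (Subgroup.mem_subgroupOf.mp hb)
      (Subgroup.mem_subgroupOf.mp hg))
  simpa only [map_mul, map_inv] using hH v ⟨_, Subgroup.mem_subgroupOf.mpr hconj, rfl⟩

end BallStabilizer

theorem normalCore_open_normal_selfSimilar_general (d : ℕ)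
    (G : Subgroup (AutT d))
    (hGfractal : IsFractal d G)
    (H : Subgroup (AutT d)) (hHG : H ≤ G)
    (hHopen : IsOpen ((H.subgroupOf G) : Set G))
    (hHss : IsSelfSimilar d H)
    (N : Subgroup (AutT d)) (hN : N = ⨅ a ∈ G, MulAut.conj a • H) :
    N ≤ G ∧ IsOpen ((N.subgroupOf G) : Set G) ∧ (N.subgroupOf G).Normal ∧
      IsSelfSimilar d N := by
  obtain rfl : N = normalCoreIn G H := hN
  obtain ⟨m, hm⟩ := exists_ballStab_inf_le hHopen
  exact ⟨normalCoreIn_le.trans hHG, isOpen_normalCoreIn_subgroupOf (isOpen_ballStab d m) hm,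
    normalCoreIn_subgroupOf_normal, isSelfSimilar_normalCoreIn (fun v => (hGfractal v).ge) hHss⟩

/-- **The normal core of an open self-similar subgroup is open, normal and self-similar.**
Let `d ≥ 2`, let `G` be a closed fractal subgroup of `Aut T_d`, and let `H` be an open
self-similar subgroup of `G`.  Then the normal core `N = ⋂_{a ∈ G} a H a⁻¹` of `H` in `G`
is an open, normal, self-similar subgroup of `G`. -/
theorem normalCore_open_normal_selfSimilar (d : ℕ) (hd : 2 ≤ d)
    (G : Subgroup (AutT d)) (hGclosed : IsClosed (G : Set (AutT d)))
    (hGfractal : IsFractal d G)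
    (H : Subgroup (AutT d)) (hHG : H ≤ G)
    (hHopen : IsOpen ((H.subgroupOf G) : Set G))
    (hHss : IsSelfSimilar d H)
    (N : Subgroup (AutT d)) (hN : N = ⨅ a ∈ G, MulAut.conj a • H) :
    N ≤ G ∧ IsOpen ((N.subgroupOf G) : Set G) ∧ (N.subgroupOf G).Normal ∧
      IsSelfSimilar d N :=
  normalCore_open_normal_selfSimilar_general d G hGfractal H hHG hHopen hHss N hN

end TreeDyn
end

section
/- Let d ≥ 2, let G be a closed self-similar subgroup of Aut T_d, and let P be a collection of closed subgroups of G such that: (1) for every H ∈ P and every vertex v, the smallest closed subgroup of G containing H ∪ H^v belongs to P; and (2) for every family (H_i)_{i ∈ I} of members of P totally ordered by inclusion, the topological closure of ⋃_{i ∈ I} H_i belongs to P. Then P is closed under self-similar closure: for every H ∈ P, the self-similar closure of H in G belongs to P. -/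
open scoped Pointwise

/-!
Among the members of `P` lying between `H` and the self-similar closure `J`, Zorn's lemma
(fed by hypothesis (2)) yields a maximal one `K`. For each vertex `v`, hypothesis (1) puts the
closure of `K ⊔ K^v` in `P`, and it still lies in `J` because `J` is closed and self-similar; so
by maximality it equals `K`, i.e. `K^v ≤ K`. Thus `K` is a closed self-similar subgroup of `G`
containing `H`, whence `J ≤ K ≤ J`.
-/

section ChainClosed

universe u

variable {Γ : Type u} [Group Γ] [TopologicalSpace Γ] [IsTopologicalGroup Γ]

theorem Subgroup.exists_maximal_mem_between_of_chain_closure (P : Set (Subgroup Γ))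
    (hchain : ∀ (I : Type u) [Nonempty I] (Hs : I → Subgroup Γ), (∀ i, Hs i ∈ P) →
      (∀ i j, Hs i ≤ Hs j ∨ Hs j ≤ Hs i) → (⨆ i, Hs i).topologicalClosure ∈ P)
    {H J : Subgroup Γ} (hH : H ∈ P) (hHJ : H ≤ J) (hJ : IsClosed (J : Set Γ)) :
    ∃ K, Maximal (fun K => K ∈ P ∧ H ≤ K ∧ K ≤ J) K := by
  set S : Set (Subgroup Γ) := {K | K ∈ P ∧ H ≤ K ∧ K ≤ J}
  have hub : ∀ c ⊆ S, IsChain (· ≤ ·) c → ∀ y ∈ c, ∃ ub ∈ S, ∀ z ∈ c, z ≤ ub := by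
    intro c hcS hc y hy
    have : Nonempty c := ⟨⟨y, hy⟩⟩
    have le_closure (z : c) : (z : Subgroup Γ) ≤ (⨆ i : c, (i : Subgroup Γ)).topologicalClosure :=
      (le_iSup (fun i : c => (i : Subgroup Γ)) z).trans (Subgroup.le_topologicalClosure _)
    refine ⟨_, ⟨?_, ?_, ?_⟩, fun z hz => le_closure ⟨z, hz⟩⟩
    · exact hchain c _ (fun i => (hcS i.2).1) fun i j => hc.total i.2 j.2
    · exact (hcS hy).2.1.trans (le_closure ⟨y, hy⟩)
    · exact Subgroup.topologicalClosure_minimal _ (iSup_le fun i => (hcS i.2).2.2) hJ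
  obtain ⟨K, -, hK⟩ := zorn_le_nonempty₀ S hub H ⟨hH, le_rfl, hHJ⟩
  exact ⟨K, hK⟩

end ChainClosed

namespace TreeDyn

theorem secSG_mono {d : ℕ} {K J : Subgroup (AutT d)} (h : K ≤ J) (v : Vertex d) :
    secSG d K v ≤ secSG d J v :=
  Subgroup.map_mono (Subgroup.comap_mono h)

theorem isSelfSimilar_of_maximal {d : ℕ} {P : Set (Subgroup (AutT d))}
    (hsec : ∀ H ∈ P, ∀ v : Vertex d, (H ⊔ secSG d H v).topologicalClosure ∈ P)
    {H J K : Subgroup (AutT d)} (hJ : IsClosed (J : Set (AutT d))) (hJss : IsSelfSimilar d J)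
    (hK : Maximal (fun K => K ∈ P ∧ H ≤ K ∧ K ≤ J) K) :
    IsSelfSimilar d K := by
  obtain ⟨⟨hKP, hHK, hKJ⟩, hKmax⟩ := hK
  intro v
  have hK_le : K ≤ (K ⊔ secSG d K v).topologicalClosure :=
    le_sup_left.trans (Subgroup.le_topologicalClosure _)
  have hclosure_le_J : (K ⊔ secSG d K v).topologicalClosure ≤ J :=
    Subgroup.topologicalClosure_minimal _
      (sup_le hKJ ((secSG_mono hKJ v).trans (hJss v))) hJ
  have hclosure_le_K : (K ⊔ secSG d K v).topologicalClosure ≤ K :=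
    hKmax ⟨hsec K hKP v, hHK.trans hK_le, hclosure_le_J⟩ hK_le
  exact le_sup_right.trans ((Subgroup.le_topologicalClosure _).trans hclosure_le_K)

theorem selfSimilar_construction_criterion_general (d : ℕ)
    (G : Subgroup (AutT d))
    (P : Set (Subgroup (AutT d)))
    (hP : ∀ H ∈ P, H ≤ G ∧ IsClosed (H : Set (AutT d)))
    (h1 : ∀ H ∈ P, ∀ v : Vertex d, (H ⊔ secSG d H v).topologicalClosure ∈ P)
    (h2 : ∀ (I : Type) [Nonempty I] (Hs : I → Subgroup (AutT d)), (∀ i, Hs i ∈ P) →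
      (∀ i j, Hs i ≤ Hs j ∨ Hs j ≤ Hs i) → (⨆ i, Hs i).topologicalClosure ∈ P) :
    ∀ H ∈ P, ∀ J : Subgroup (AutT d), IsSelfSimilarClosure d G H J → J ∈ P := by
  rintro H hH J ⟨hHJ, hJG, hJ, hJss, hJmin⟩
  obtain ⟨K, hK⟩ := Subgroup.exists_maximal_mem_between_of_chain_closure P h2 hH hHJ hJ
  have hKss : IsSelfSimilar d K := isSelfSimilar_of_maximal h1 hJ hJss hK
  obtain ⟨hKP, hHK, hKJ⟩ := hK.prop
  have hJK : J ≤ K := hJmin K hHK (hKJ.trans hJG) (hP K hKP).2 hKss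
  rwa [le_antisymm hJK hKJ]

/-- **Construction criterion for self-similar properties.**
Let `d ≥ 2`, let `G` be a closed self-similar subgroup of `Aut T_d`, and let `P` be a
collection of closed subgroups of `G` such that (1) for every `H ∈ P` and every vertex
`v`, the smallest closed subgroup of `G` containing `H ∪ H^v` belongs to `P`, and
(2) for every family of members of `P` totally ordered by inclusion, the topological
closure of its union belongs to `P`.  Then `P` is closed under self-similar closure. -/
theorem selfSimilar_construction_criterion (d : ℕ) (hd : 2 ≤ d)
    (G : Subgroup (AutT d)) (hGclosed : IsClosed (G : Set (AutT d)))
    (hGss : IsSelfSimilar d G)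
    (P : Set (Subgroup (AutT d)))
    (hP : ∀ H ∈ P, H ≤ G ∧ IsClosed (H : Set (AutT d)))
    (h1 : ∀ H ∈ P, ∀ v : Vertex d, (H ⊔ secSG d H v).topologicalClosure ∈ P)
    (h2 : ∀ (I : Type) [Nonempty I] (Hs : I → Subgroup (AutT d)), (∀ i, Hs i ∈ P) →
      (∀ i j, Hs i ≤ Hs j ∨ Hs j ≤ Hs i) → (⨆ i, Hs i).topologicalClosure ∈ P) :
    ∀ H ∈ P, ∀ J : Subgroup (AutT d), IsSelfSimilarClosure d G H J → J ∈ P :=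
  selfSimilar_construction_criterion_general d G P hP h1 h2

end TreeDyn
end

section
/- Let d ≥ 2 and let G be a closed fractal subgroup of Aut T_d. If H is an open normal subgroup of G that is torsion (every element of H has finite order), then the self-similar closure of H in G is an open, normal, torsion subgroup of G. -/
/-!
Openness of `J` is inherited from `H ≤ J`. For normality, the elements of `J` all of whose
`G`-conjugates stay in `J` form a closed subgroup containing the normal subgroup `H`; it is
self-similar because fractality writes every `g ∈ G` as a section `w|_v` with `w ∈ G`, and then
`g · x|_v · g⁻¹ = (w x w⁻¹)|_v`. Minimality of `J` makes this subgroup all of `J`.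
For torsion, the open subgroup `H` contains every element of `G` acting trivially on some ball
around the root. That ball is finite, so a power of each `g ∈ G` acts trivially on it and lies
in `H`; hence all of `G`, and with it `J`, is torsion.
-/

open scoped Pointwise

namespace Subgroup

variable {Γ : Type*} [Group Γ]

def conjCore (J G : Subgroup Γ) : Subgroup Γ :=
  ⨅ g ∈ G, J.comap (MulAut.conj g).toMonoidHom

variable {G H J : Subgroup Γ}

theorem mem_conjCore {x : Γ} : x ∈ J.conjCore G ↔ ∀ g ∈ G, g * x * g⁻¹ ∈ J := by
  simp [conjCore, mem_iInf]

theorem conjCore_le : J.conjCore G ≤ J := fun _ hx => by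
  simpa using mem_conjCore.mp hx 1 G.one_mem

theorem le_conjCore (hHG : H ≤ G) (hH : (H.subgroupOf G).Normal) (hHJ : H ≤ J) :
    H ≤ J.conjCore G := fun h hh => mem_conjCore.mpr fun g hg =>
  hHJ (mem_subgroupOf.mp (hH.conj_mem ⟨h, hHG hh⟩ (mem_subgroupOf.mpr hh) ⟨g, hg⟩))

theorem normal_subgroupOf_of_le_conjCore (hJ : J ≤ J.conjCore G) : (J.subgroupOf G).Normal :=
  ⟨fun _ hx g => mem_subgroupOf.mpr (mem_conjCore.mp (hJ (mem_subgroupOf.mp hx)) g g.2)⟩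

theorem isClosed_conjCore [TopologicalSpace Γ] [ContinuousMul Γ] (hJ : IsClosed (J : Set Γ)) :
    IsClosed (J.conjCore G : Set Γ) := by
  have hset : (J.conjCore G : Set Γ) = ⋂ g ∈ G, (fun x => g * x * g⁻¹) ⁻¹' J := by
    ext x
    simp only [SetLike.mem_coe, mem_conjCore, Set.mem_iInter, Set.mem_preimage]
  rw [hset]
  exact isClosed_biInter fun g _ => hJ.preimage (by fun_prop)

end Subgroup

theorem isOfFinOrder_of_inf_ker_le {Γ F : Type*} [Group Γ] [Group F] [Finite F] (φ : Γ →* F)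
    {G H : Subgroup Γ} (hker : G ⊓ φ.ker ≤ H) (hH : ∀ h ∈ H, IsOfFinOrder h) {g : Γ}
    (hg : g ∈ G) : IsOfFinOrder g := by
  have hpow : g ^ orderOf (φ g) ∈ H :=
    hker ⟨pow_mem hg _, by simp [pow_orderOf_eq_one]⟩
  exact (hH _ hpow).of_pow (orderOf_pos (φ g)).ne'

namespace TreeDyn

open AutT Topology

variable {d : ℕ}

theorem mem_secSG {A : Subgroup (AutT d)} {v : Vertex d} {x : AutT d} :
    x ∈ secSG d A v ↔ ∃ g ∈ A, g ∈ stabT d v ∧ sec g v = x := by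
  simp only [secSG, Subgroup.mem_map, Subgroup.mem_subgroupOf]
  constructor
  · rintro ⟨g, hgA, rfl⟩
    exact ⟨g, hgA, g.2, rfl⟩
  · rintro ⟨g, hgA, hgv, rfl⟩
    exact ⟨⟨g, hgv⟩, hgA, rfl⟩

theorem sec_conj {v : Vertex d} {w x : AutT d} (hw : w ∈ stabT d v) (hx : x ∈ stabT d v) :
    sec (w * x * w⁻¹) v = sec w v * sec x v * (sec w v)⁻¹ := by
  change secHom d v (⟨w, hw⟩ * ⟨x, hx⟩ * ⟨w, hw⟩⁻¹) = _
  rw [map_mul, map_mul, map_inv]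
  rfl

theorem IsSelfSimilar.conjCore {G J : Subgroup (AutT d)} (hG : IsFractal d G)
    (hJ : IsSelfSimilar d J) : IsSelfSimilar d (J.conjCore G) := by
  intro v y hy
  obtain ⟨x, hxJ, hxv, rfl⟩ := mem_secSG.mp hy
  refine Subgroup.mem_conjCore.mpr fun g hg => ?_
  obtain ⟨w, hwG, hwv, rfl⟩ := mem_secSG.mp ((hG v).symm ▸ hg : g ∈ secSG d G v)
  rw [← sec_conj hwv hxv]
  exact hJ v (mem_secSG.mpr ⟨_, Subgroup.mem_conjCore.mp hxJ w hwG,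
    mul_mem (mul_mem hwv hxv) (inv_mem hwv), rfl⟩)

def ballPerm (d N : ℕ) : AutT d →* Equiv.Perm {w : Vertex d // w.length ≤ N} where
  toFun g := g.toPerm.subtypePerm fun w => by rw [length_apply]
  map_one' := rfl
  map_mul' _ _ := rfl

instance (N : ℕ) : Finite {w : Vertex d // w.length ≤ N} :=
  (List.finite_length_le (Fin d) N).to_subtype

theorem apply_eq_of_mem_ker_ballPerm {N : ℕ} {g : AutT d} (hg : g ∈ (ballPerm d N).ker)
    {w : Vertex d} (hw : w.length ≤ N) : g.toPerm w = w :=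
  congrArg Subtype.val (Equiv.ext_iff.mp (MonoidHom.mem_ker.mp hg) ⟨w, hw⟩)

theorem exists_inf_ker_ballPerm_le {G H : Subgroup (AutT d)}
    (hH : IsOpen ((H.subgroupOf G) : Set G)) : ∃ N, G ⊓ (ballPerm d N).ker ≤ H := by
  have hind : IsInducing fun g : G => ((g : AutT d).toPerm : Vertex d → Vertex d) :=
    (⟨rfl⟩ : IsInducing fun g : AutT d => (g.toPerm : Vertex d → Vertex d)).comp
      IsInducing.subtypeVal
  obtain ⟨u, hu, hHu⟩ := hind.isOpen_iff.mp hH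
  have hid : ((1 : AutT d).toPerm : Vertex d → Vertex d) ∈ u := by
    have h1 : (1 : G) ∈ ((H.subgroupOf G) : Set G) := (H.subgroupOf G).one_mem
    rwa [← hHu] at h1
  obtain ⟨I, U, hIU, hIu⟩ := isOpen_pi_iff.mp hu _ hid
  refine ⟨I.sup List.length, fun g ⟨hgG, hgker⟩ => ?_⟩
  have hgu : ((g : AutT d).toPerm : Vertex d → Vertex d) ∈ u := hIu fun w hw => by
    change (g : AutT d).toPerm w ∈ U w
    rw [apply_eq_of_mem_ker_ballPerm hgker (Finset.le_sup hw)]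
    exact (hIU w hw).2
  have hg : (⟨g, hgG⟩ : G) ∈ ((H.subgroupOf G) : Set G) := by
    rw [← hHu]
    exact hgu
  exact Subgroup.mem_subgroupOf.mp hg

theorem isOfFinOrder_of_isOpen_subgroupOf {G H : Subgroup (AutT d)}
    (hHopen : IsOpen ((H.subgroupOf G) : Set G)) (hH : ∀ h ∈ H, IsOfFinOrder h) {g : AutT d}
    (hg : g ∈ G) : IsOfFinOrder g :=
  let ⟨_, hker⟩ := exists_inf_ker_ballPerm_le hHopen
  isOfFinOrder_of_inf_ker_le _ hker hH hg

theorem torsion_selfSimilarClosure_general (d : ℕ)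
    (G : Subgroup (AutT d))
    (hGfractal : IsFractal d G)
    (H : Subgroup (AutT d)) (hHG : H ≤ G)
    (hHopen : IsOpen ((H.subgroupOf G) : Set G))
    (hHnormal : (H.subgroupOf G).Normal)
    (hHtorsion : ∀ h ∈ H, IsOfFinOrder h) :
    ∀ J : Subgroup (AutT d), IsSelfSimilarClosure d G H J →
      IsOpen ((J.subgroupOf G) : Set G) ∧ (J.subgroupOf G).Normal ∧
        ∀ j ∈ J, IsOfFinOrder j := by
  rintro J ⟨hHJ, hJG, hJclosed, hJss, hmin⟩
  have hJcore : J ≤ J.conjCore G :=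
    hmin _ (Subgroup.le_conjCore hHG hHnormal hHJ) (Subgroup.conjCore_le.trans hJG)
      (Subgroup.isClosed_conjCore hJclosed) (hJss.conjCore hGfractal)
  exact ⟨Subgroup.isOpen_mono (Subgroup.comap_mono hHJ) hHopen,
    Subgroup.normal_subgroupOf_of_le_conjCore hJcore,
    fun j hj => isOfFinOrder_of_isOpen_subgroupOf hHopen hHtorsion (hJG hj)⟩

/-- **Open normal torsion subgroups are self-similarity-closed.**
Let `d ≥ 2` and let `G` be a closed fractal subgroup of `Aut T_d`.  If `H` is an open
normal subgroup of `G` that is torsion (every element has finite order), then the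
self-similar closure of `H` in `G` is an open, normal, torsion subgroup of `G`. -/
theorem torsion_selfSimilarClosure (d : ℕ) (hd : 2 ≤ d)
    (G : Subgroup (AutT d)) (hGclosed : IsClosed (G : Set (AutT d)))
    (hGfractal : IsFractal d G)
    (H : Subgroup (AutT d)) (hHG : H ≤ G)
    (hHopen : IsOpen ((H.subgroupOf G) : Set G))
    (hHnormal : (H.subgroupOf G).Normal)
    (hHtorsion : ∀ h ∈ H, IsOfFinOrder h) :
    ∀ J : Subgroup (AutT d), IsSelfSimilarClosure d G H J →
      IsOpen ((J.subgroupOf G) : Set G) ∧ (J.subgroupOf G).Normal ∧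
        ∀ j ∈ J, IsOfFinOrder j :=
  torsion_selfSimilarClosure_general d G hGfractal H hHG hHopen hHnormal hHtorsion

end TreeDyn
end

section
/- Let d ≥ 2 and let G be a closed subgroup of Aut T_d containing the standard odometer ω. Suppose G is pronilpotent. If G contains a nontrivial element g that acts trivially on the first level of T_d and whose first-level sections g|_x are trivial for all but exactly one letter x ∈ {0,…,d−1} (i.e., in wreath coordinates g = (1,…,1,h,1,…,1) with h ≠ 1), then d is a power of some prime p and G is pro-p. -/
open scoped Pointwise

/-!
The image `Q_m` of `G` in the symmetric group of level `m` is a finite nilpotent group. Coding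
level `m` by `ZMod (d ^ m)`, the odometer becomes the translation `+ 1`, and in a finite
nilpotent group elements of coprime prime-power orders commute.

Some power `b` of the image of `g` has prime order `r`, and it only moves points whose residue
mod `d` is `x₀`. If a prime `q ≠ r` divided `d`, the translation by the `q'`-part `c` of `d ^ m`
would have `q`-power order, so it would commute with `b` and preserve the set of points moved by
`b`; as `d ∤ c` this is impossible, hence `d = r ^ k`. Then an element of prime order `s ≠ r`
of `Q_m` commutes with the `r`-element `+ 1`, so it is a translation and `s ∣ d ^ m`, a
contradiction: every `Q_m` is an `r`-group. The level stabilizers form a basis of open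
subgroups, so `G` is pro-`r`.
-/

open Topology

theorem IsPGroup.of_forall_orderOf_prime {G : Type*} [Group G] [Finite G] {p : ℕ}
    (h : ∀ (g : G) (q : ℕ), q.Prime → orderOf g = q → q = p) :
    IsPGroup p G :=
  IsPGroup.of_card <| Nat.eq_prime_pow_of_unique_prime_dvd Nat.card_pos.ne' fun {q} hq hqG => by
    have := Fact.mk hq
    obtain ⟨g, hg⟩ := exists_prime_orderOf_dvd_card' q hqG
    exact h g q hq hg

theorem IsPGroup.quotient_of_ker_le {G H : Type*} [Group G] [Group H] {p : ℕ} {f : G →* H}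
    (hf : IsPGroup p f.range) {N : Subgroup G} [N.Normal] (hN : f.ker ≤ N) :
    IsPGroup p (G ⧸ N) := by
  intro y
  induction y using QuotientGroup.induction_on with
  | H x =>
    obtain ⟨k, hk⟩ := hf ⟨f x, x, rfl⟩
    refine ⟨k, (QuotientGroup.eq_one_iff _).mpr (hN ?_)⟩
    simpa [Subtype.ext_iff] using hk

theorem Commute.of_pow_prime_pow_eq_one {G : Type*} [Group G] [Finite G]
    [Group.IsNilpotent G] {p q : ℕ} (hp : p.Prime) (hq : q.Prime) (hpq : p ≠ q) {x y : G}
    {a b : ℕ} (hx : x ^ p ^ a = 1) (hy : y ^ q ^ b = 1) : Commute x y := by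
  have := Fact.mk hp
  have := Fact.mk hq
  obtain ⟨P, hxP⟩ := (IsPGroup.of_card_dvd_pow (p := p) (G := Subgroup.zpowers x)
    (by rw [Nat.card_zpowers]; exact orderOf_dvd_of_pow_eq_one hx)).exists_le_sylow
  obtain ⟨R, hyR⟩ := (IsPGroup.of_card_dvd_pow (p := q) (G := Subgroup.zpowers y)
    (by rw [Nat.card_zpowers]; exact orderOf_dvd_of_pow_eq_one hy)).exists_le_sylow
  exact Subgroup.commute_of_normal_of_disjoint _ _ inferInstance inferInstance
    (IsPGroup.disjoint_of_ne p q hpq _ _ P.isPGroup' R.isPGroup') x y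
    (hxP (Subgroup.mem_zpowers x)) (hyR (Subgroup.mem_zpowers y))

namespace TreeDyn

open AutT

theorem Pronilpotent.isNilpotent_range {G H : Type*} [Group G] [TopologicalSpace G] [Group H]
    (hG : Pronilpotent G) (f : G →* H) (hf : IsOpen (f.ker : Set G)) :
    Group.IsNilpotent f.range :=
  haveI := hG f.ker hf
  Group.nilpotent_of_mulEquiv (QuotientGroup.quotientKerEquivRange f)

section Translations

variable {n : ℕ}

theorem addRight_natCast_eq_pow (k : ℕ) :
    Equiv.addRight (k : ZMod n) = Equiv.addRight 1 ^ k := by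
  rw [Equiv.nsmul_addRight, nsmul_one]

theorem addRight_pow_eq_one (c : ZMod n) : Equiv.addRight c ^ n = 1 := by
  rw [Equiv.nsmul_addRight, nsmul_eq_mul, ZMod.natCast_self, zero_mul, Equiv.addRight_zero]

theorem addRight_natCast_mem {Q : Subgroup (Equiv.Perm (ZMod n))} (hQ : Equiv.addRight 1 ∈ Q)
    (k : ℕ) : Equiv.addRight (k : ZMod n) ∈ Q :=
  addRight_natCast_eq_pow k ▸ Q.pow_mem hQ k

variable [NeZero n]

theorem eq_addRight_of_commute {σ : Equiv.Perm (ZMod n)} (h : Commute σ (Equiv.addRight 1)) :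
    σ = Equiv.addRight (σ 0) := by
  ext u
  have hu := congrArg (· 0) (h.pow_right u.val).eq
  simp only [← addRight_natCast_eq_pow, ZMod.natCast_zmod_val, Equiv.Perm.mul_apply,
    Equiv.coe_addRight, zero_add] at hu
  rw [hu, Equiv.coe_addRight, add_comm]

variable {Q : Subgroup (Equiv.Perm (ZMod n))} [Group.IsNilpotent Q]

theorem isPGroup_of_addRight_one_mem {r k : ℕ} (hr : r.Prime) (hn : n = r ^ k)
    (hQ : Equiv.addRight 1 ∈ Q) : IsPGroup r Q := by
  refine IsPGroup.of_forall_orderOf_prime fun y s hs hy => ?_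
  by_contra hsr
  have hτ : (⟨_, hQ⟩ : Q) ^ r ^ k = 1 := Subtype.ext (hn ▸ addRight_pow_eq_one 1)
  have hcomm : Commute y ⟨_, hQ⟩ := Commute.of_pow_prime_pow_eq_one hs hr hsr
    (a := 1) (by rw [pow_one, ← hy, pow_orderOf_eq_one]) hτ
  have hy_translation : (y : Equiv.Perm (ZMod n)) = Equiv.addRight ((y : Equiv.Perm _) 0) :=
    eq_addRight_of_commute (hcomm.map Q.subtype)
  have hyn : y ^ n = 1 := by
    apply Subtype.ext
    rw [Subgroup.coe_pow, hy_translation, addRight_pow_eq_one, Subgroup.coe_one]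
  have hsn : s ∣ r ^ k := hn ▸ hy ▸ orderOf_dvd_of_pow_eq_one hyn
  exact hsr ((Nat.prime_dvd_prime_iff_eq hs hr).mp (hs.dvd_of_dvd_pow hsn))

theorem prime_eq_of_residue {d : ℕ} (hdn : d ∣ n) (hQ : Equiv.addRight 1 ∈ Q) {b : Q}
    {r : ℕ} (hr : r.Prime) (hb : orderOf b = r) {x : ZMod d}
    (hres : ∀ s, (b : Equiv.Perm (ZMod n)) s ≠ s → ZMod.castHom hdn (ZMod d) s = x)
    {q : ℕ} (hq : q.Prime) (hqd : q ∣ d) : q = r := by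
  by_contra hqr
  set c := ordCompl[q] n
  let τ : Q := ⟨Equiv.addRight (c : ZMod n), addRight_natCast_mem hQ c⟩
  have hτ : τ ^ q ^ n.factorization q = 1 := by
    apply Subtype.ext
    change Equiv.addRight (c : ZMod n) ^ _ = 1
    rw [addRight_natCast_eq_pow, ← pow_mul, mul_comm, Nat.ordProj_mul_ordCompl_eq_self,
      ← addRight_natCast_eq_pow, ZMod.natCast_self, Equiv.addRight_zero]
  have hcomm : Commute b τ := Commute.of_pow_prime_pow_eq_one hr hq (Ne.symm hqr)
    (a := 1) (by rw [pow_one, ← hb, pow_orderOf_eq_one]) hτ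
  obtain ⟨t, ht⟩ : ∃ t, (b : Equiv.Perm (ZMod n)) t ≠ t := by
    by_contra! h
    exact hr.one_lt.ne' (hb ▸ orderOf_eq_one_iff.mpr (Subtype.ext (Equiv.ext h)))
  have hbc : (b : Equiv.Perm (ZMod n)) (t + c) = (b : Equiv.Perm (ZMod n)) t + c :=
    congrArg (· t) (congrArg Subtype.val hcomm.eq)
  have hc : ZMod.castHom hdn (ZMod d) c = 0 := by
    have h := hres (t + c) (by rw [hbc]; exact fun h => ht (add_right_cancel h))
    rwa [map_add, hres t ht, add_eq_left] at h
  rw [map_natCast, ZMod.natCast_eq_zero_iff] at hc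
  exact Nat.not_dvd_ordCompl hq (NeZero.ne n) (hqd.trans hc)

theorem exists_prime_pow_eq_of_residue {d : ℕ} (hdn : d ∣ n) (hQ : Equiv.addRight 1 ∈ Q)
    {b : Equiv.Perm (ZMod n)} (hbQ : b ∈ Q) (hb : b ≠ 1) {x : ZMod d}
    (hres : ∀ s, b s ≠ s → ZMod.castHom hdn (ZMod d) s = x) :
    ∃ r, r.Prime ∧ ∃ k, d = r ^ k := by
  set k := orderOf (⟨b, hbQ⟩ : Q)
  have hk : k ≠ 1 := fun h => hb (congrArg Subtype.val (orderOf_eq_one_iff.mp h))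
  have hr : k.minFac.Prime := Nat.minFac_prime hk
  have hd : d ≠ 0 := by rintro rfl; exact NeZero.ne n (Nat.eq_zero_of_zero_dvd hdn)
  refine ⟨k.minFac, hr, _, Nat.eq_prime_pow_of_unique_prime_dvd hd fun hq hqd =>
    prime_eq_of_residue hdn hQ hr (orderOf_pow_orderOf_div (orderOf_pos _).ne' k.minFac_dvd)
      (fun s hs => hres s fun h => hs ?_) hq hqd⟩
  exact Equiv.Perm.pow_apply_eq_self_of_apply_eq_self h _

end Translations

section Topology

variable {d : ℕ}

theorem levelStab_anti [NeZero d] {m m' : ℕ} (h : m ≤ m') :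
    levelStab d m' ≤ levelStab d m := by
  intro g hg v hv
  have hpad := take_apply g v (List.replicate (m' - m) 0)
  rw [hg _ (by simp; omega), List.take_left] at hpad
  exact hpad.symm

theorem levelStab_mem_nhds (m : ℕ) : (levelStab d m : Set (AutT d)) ∈ 𝓝 1 := by
  rw [nhds_induced]
  refine ⟨_, set_pi_mem_nhds (List.finite_length_eq (Fin d) m)
    fun w _ => mem_nhds_discrete.mpr rfl, fun g hg w hw => (hg w hw).symm⟩

theorem isOpen_levelStab (m : ℕ) : IsOpen (levelStab d m : Set (AutT d)) :=
  Subgroup.isOpen_of_mem_nhds _ (levelStab_mem_nhds m)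

theorem exists_levelStab_subset [NeZero d] {U : Set (AutT d)} (hU : U ∈ 𝓝 1) :
    ∃ m, (levelStab d m : Set (AutT d)) ⊆ U := by
  rw [nhds_induced, Filter.mem_comap] at hU
  obtain ⟨V, hV, hVU⟩ := hU
  rw [nhds_pi, Filter.mem_pi] at hV
  obtain ⟨I, hI, t, ht, hIt⟩ := hV
  obtain ⟨m, hm⟩ := (hI.image List.length).bddAbove
  refine ⟨m, fun g hg => hVU (hIt fun w hw => ?_)⟩
  change g.toPerm w ∈ t w
  rw [levelStab_anti (hm ⟨w, hw, rfl⟩) hg w rfl]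
  exact mem_of_mem_nhds (ht w)

theorem exists_levelStab_comap_le [NeZero d] {G : Subgroup (AutT d)} {N : Subgroup G}
    (hN : IsOpen (N : Set G)) : ∃ m, (levelStab d m).comap G.subtype ≤ N := by
  obtain ⟨U, hU, hUN⟩ := (mem_nhds_subtype _ _ _).mp (hN.mem_nhds N.one_mem)
  obtain ⟨m, hm⟩ := exists_levelStab_subset hU
  exact ⟨m, fun x hx => hUN (hm hx)⟩

end Topology

section Levels

variable {d : ℕ}

theorem exists_eq_cons_of_apply_ne {g : AutT d} (hfix : ∀ x : Fin d, g.toPerm [x] = [x])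
    {x₀ : Fin d} (hother : ∀ x : Fin d, x ≠ x₀ → sec g [x] = 1) {w : Vertex d}
    (hw : g.toPerm w ≠ w) : ∃ u, w = x₀ :: u := by
  rcases w with _ | ⟨x, u⟩
  · exact absurd (List.eq_nil_of_length_eq_zero (length_apply g [])) hw
  · refine ⟨u, ?_⟩
    by_contra hx
    have hsec : (sec g [x]).toPerm u = u := by rw [hother x (by simpa using hx)]; rfl
    apply hw
    rw [← List.singleton_append, secFun_spec, hfix]
    exact congrArg _ hsec

/-- The root letter is the least significant digit, so that the odometer acts as `+ 1`. -/
def wordValue (w : Vertex d) : ℕ := Nat.ofDigits d (w.map Fin.val)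

theorem wordValue_cons (x : Fin d) (w : Vertex d) :
    wordValue (x :: w) = x + d * wordValue w := rfl

theorem wordValue_lt [Fact (1 < d)] (w : Vertex d) : wordValue w < d ^ w.length := by
  rw [← List.length_map Fin.val]
  exact Nat.ofDigits_lt_base_pow_length Fact.out (by simp)

theorem wordValue_injective_of_length_eq [Fact (1 < d)] {v w : Vertex d}
    (hlen : v.length = w.length) (h : wordValue v = wordValue w) : v = w :=
  List.map_injective_iff.mpr Fin.val_injective
    (Nat.ofDigits_inj_of_len_eq Fact.out (by simpa) (by simp) (by simp) h)

theorem wordValue_odF (w : Vertex d) :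
    wordValue (odF d w) ≡ wordValue w + 1 [MOD d ^ w.length] := by
  induction w with
  | nil => exact Nat.modEq_one
  | cons x u ih =>
    by_cases h : x.1 + 1 = d
    · have hx : (succFin x).1 = 0 := (succFin_val_eq_zero_iff x).mpr h
      rw [odF, if_pos h, wordValue_cons, wordValue_cons, hx, List.length_cons, pow_succ']
      convert ih.mul_left' d using 1
      · ring
      · rw [Nat.mul_succ]
        linarith
    · have hx : (succFin x).1 = x.1 + 1 := Nat.mod_eq_of_lt (by omega)
      rw [odF, if_neg h, wordValue_cons, wordValue_cons, hx, add_right_comm]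

instance (m : ℕ) : MulAction (AutT d) (List.Vector (Fin d) m) where
  smul g w := ⟨g.toPerm w.1, by rw [length_apply, w.2]⟩
  one_smul _ := rfl
  mul_smul _ _ _ := rfl

variable [Fact (1 < d)]

noncomputable def levelEquiv (d m : ℕ) [Fact (1 < d)] : List.Vector (Fin d) m ≃ ZMod (d ^ m) :=
  Equiv.ofBijective (fun w => (wordValue w.1 : ZMod (d ^ m))) <|
    (Fintype.bijective_iff_injective_and_card _).mpr ⟨fun v w h => by
      have hv := v.2 ▸ wordValue_lt v.1
      have hw := w.2 ▸ wordValue_lt w.1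
      simp only [ZMod.natCast_eq_natCast_iff', Nat.mod_eq_of_lt hv, Nat.mod_eq_of_lt hw] at h
      exact Subtype.ext (wordValue_injective_of_length_eq (v.2.trans w.2.symm) h),
      by simp [card_vector, ZMod.card]⟩

theorem levelEquiv_apply {m : ℕ} (w : List.Vector (Fin d) m) :
    levelEquiv d m w = wordValue w.1 := rfl

noncomputable def levelHom (d m : ℕ) [Fact (1 < d)] : AutT d →* Equiv.Perm (ZMod (d ^ m)) :=
  (levelEquiv d m).permCongrHom.toMonoidHom.comp (MulAction.toPermHom _ _)

theorem levelHom_apply {m : ℕ} (g : AutT d) (s : ZMod (d ^ m)) :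
    levelHom d m g s = levelEquiv d m (g • (levelEquiv d m).symm s) := rfl

theorem ker_levelHom (m : ℕ) : (levelHom d m).ker = levelStab d m := by
  ext g
  rw [MonoidHom.mem_ker, levelHom, MonoidHom.comp_apply, MulEquiv.coe_toMonoidHom,
    MulEquiv.map_eq_one_iff, Equiv.Perm.ext_iff]
  exact ⟨fun h w hw => congrArg Subtype.val (h ⟨w, hw⟩), fun h w => Subtype.ext (h w.1 w.2)⟩

theorem levelHom_od (m : ℕ) : levelHom d m (od d) = Equiv.addRight 1 := by
  ext s
  obtain ⟨w, rfl⟩ := (levelEquiv d m).surjective s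
  rw [levelHom_apply, Equiv.symm_apply_apply]
  show (wordValue (odF d w.1) : ZMod (d ^ m)) = wordValue w.1 + 1
  have h := wordValue_odF w.1
  rw [w.2] at h
  exact_mod_cast (ZMod.natCast_eq_natCast_iff _ _ _).mpr h

theorem levelHom_residue {g : AutT d} (hfix : ∀ x : Fin d, g.toPerm [x] = [x])
    {x₀ : Fin d} (hother : ∀ x : Fin d, x ≠ x₀ → sec g [x] = 1) {m : ℕ}
    {s : ZMod (d ^ (m + 1))} (hs : levelHom d (m + 1) g s ≠ s) :
    ZMod.castHom (dvd_pow_self d m.succ_ne_zero) (ZMod d) s = (x₀ : ℕ) := by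
  obtain ⟨w, rfl⟩ := (levelEquiv d (m + 1)).surjective s
  rw [levelHom_apply, Equiv.symm_apply_apply, (levelEquiv d _).injective.ne_iff] at hs
  obtain ⟨u, hu⟩ := exists_eq_cons_of_apply_ne hfix hother
    (fun h => hs (Subtype.ext h))
  rw [levelEquiv_apply, hu, wordValue_cons, map_natCast]
  push_cast
  rw [ZMod.natCast_self, zero_mul, add_zero]

theorem ker_levelHom_comp_subtype (G : Subgroup (AutT d)) (m : ℕ) :
    ((levelHom d m).comp G.subtype).ker = (levelStab d m).comap G.subtype := by
  rw [← MonoidHom.comap_ker, ker_levelHom]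

theorem isOpen_ker_levelHom_comp_subtype (G : Subgroup (AutT d)) (m : ℕ) :
    IsOpen (((levelHom d m).comp G.subtype).ker : Set G) := by
  rw [ker_levelHom_comp_subtype]
  exact (isOpen_levelStab m).preimage continuous_subtype_val

theorem exists_levelHom_ne_one {g : AutT d} (hg : g ≠ 1) : ∃ m, levelHom d (m + 1) g ≠ 1 := by
  obtain ⟨w, hw⟩ : ∃ w, g.toPerm w ≠ w := by
    by_contra! h
    exact hg (Subtype.ext (Equiv.ext h))
  refine ⟨w.length, fun h => hw ?_⟩
  rw [← MonoidHom.mem_ker, ker_levelHom] at h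
  exact levelStab_anti w.length.le_succ h w rfl

end Levels

theorem pronilpotent_implies_proP_general (d : ℕ) (hd : 2 ≤ d)
    (G : Subgroup (AutT d)) (hω : od d ∈ G) (hnilp : Pronilpotent G)
    (g : AutT d) (hgG : g ∈ G) (hg1 : g ≠ 1)
    (hfix : ∀ x : Fin d, g.toPerm [x] = [x])
    (x₀ : Fin d) (hother : ∀ x : Fin d, x ≠ x₀ → AutT.sec g [x] = 1) :
    ∃ p : ℕ, p.Prime ∧ (∃ n : ℕ, d = p ^ n) ∧ IsProP p G := by
  have : Fact (1 < d) := ⟨hd⟩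
  let Q (m : ℕ) := ((levelHom d m).comp G.subtype).range
  have hQ (m : ℕ) : Equiv.addRight 1 ∈ Q m := ⟨⟨od d, hω⟩, levelHom_od m⟩
  have (m : ℕ) : Group.IsNilpotent (Q m) :=
    hnilp.isNilpotent_range _ (isOpen_ker_levelHom_comp_subtype G m)
  obtain ⟨m, hm⟩ := exists_levelHom_ne_one hg1
  obtain ⟨p, hp, k, hk⟩ := exists_prime_pow_eq_of_residue (dvd_pow_self d m.succ_ne_zero)
    (hQ (m + 1)) ⟨⟨g, hgG⟩, rfl⟩ hm fun _ => levelHom_residue hfix hother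
  refine ⟨p, hp, ⟨k, hk⟩, fun N _ hN => ?_⟩
  obtain ⟨m', hm'⟩ := exists_levelStab_comap_le hN
  exact (isPGroup_of_addRight_one_mem hp (by rw [hk, ← pow_mul]) (hQ m')).quotient_of_ker_le
    (ker_levelHom_comp_subtype G m' ▸ hm')

/-- **Pronilpotent pfIMG-style groups with a one-coordinate element are pro-`p`.**
Let `d ≥ 2` and let `G` be a closed subgroup of `Aut T_d` containing the standard
odometer.  Suppose `G` is pronilpotent.  If `G` contains a nontrivial element `g` fixing
the first level whose first-level sections are trivial except at exactly one letter
(`g = (1,…,1,h,1,…,1)` with `h ≠ 1` in wreath coordinates), then `d` is a power of some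
prime `p` and `G` is pro-`p`. -/
theorem pronilpotent_implies_proP (d : ℕ) (hd : 2 ≤ d)
    (G : Subgroup (AutT d)) (hGclosed : IsClosed (G : Set (AutT d)))
    (hω : od d ∈ G) (hnilp : Pronilpotent G)
    (g : AutT d) (hgG : g ∈ G) (hg1 : g ≠ 1)
    (hfix : ∀ x : Fin d, g.toPerm [x] = [x])
    (x₀ : Fin d) (hx₀ : AutT.sec g [x₀] ≠ 1)
    (hother : ∀ x : Fin d, x ≠ x₀ → AutT.sec g [x] = 1) :
    ∃ p : ℕ, p.Prime ∧ (∃ n : ℕ, d = p ^ n) ∧ IsProP p G :=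
  pronilpotent_implies_proP_general d hd G hω hnilp g hgG hg1 hfix x₀ hother

end TreeDyn
end
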